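/- Let p be a prime, G and H abelian groups, and J a subgroup of G × H. If the natural map J/J^p → G/G^p (induced by the projection π_G) is injective, then the restriction map Hom((G × H)/J, Z/pZ) → Hom(H, Z/pZ) is surjective. -/

import Mathlib

/-!
Put `N = J ⊔ (G × H)^p`. The quotient `(G × H) ⧸ N` is an `𝔽_p`-vector space through which
`(G × H) ⧸ J` maps, so it suffices to factor `ψ : H →* ℤ/p` through `h ↦ (1, h) mod N`: the
induced functional on the image of `H` then extends to the whole space. It factors because if
`(1, h) = j * x^p` with `j ∈ J`, the first coordinate of `j` is a `p`-th power, so `j ∈ J^p` by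
injectivity, hence `h` is a `p`-th power and `ψ h = 1`.
-/

theorem AddMonoidHom.exists_comp_eq_of_ker_le {p : ℕ} [Fact p.Prime] {A V : Type*}
    [AddCommGroup A] [AddCommGroup V] [Module (ZMod p) V] (ι : A →+ V) (ψ : A →+ ZMod p)
    (hker : ι.ker ≤ ψ.ker) : ∃ φ : V →+ ZMod p, φ.comp ι = ψ := by
  let ψ' : ι.range →+ ZMod p :=
    ι.rangeRestrict.liftOfSurjective ι.rangeRestrict_surjective ⟨ψ, ι.ker_rangeRestrict ▸ hker⟩
  obtain ⟨g, hg⟩ := LinearMap.exists_extend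
    (p := AddSubgroup.toZModSubmodule p ι.range) (ψ'.toZModLinearMap p)
  exact ⟨g.toAddMonoidHom, AddMonoidHom.ext fun a => (LinearMap.congr_fun hg ⟨ι a, a, rfl⟩).trans
    (ι.rangeRestrict.liftOfRightInverse_comp_apply _ (Function.rightInverse_surjInv _) _ a)⟩

theorem MonoidHom.exists_comp_eq_of_ker_le {p : ℕ} [Fact p.Prime] {A W : Type*}
    [CommGroup A] [CommGroup W] (hW : ∀ w : W, w ^ p = 1) (ι : A →* W)
    (ψ : A →* Multiplicative (ZMod p)) (hker : ι.ker ≤ ψ.ker) :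
    ∃ φ : W →* Multiplicative (ZMod p), φ.comp ι = ψ := by
  let _ : Module (ZMod p) (Additive W) :=
    AddCommGroup.zmodModule fun w => congrArg Additive.ofMul (hW w.toMul)
  obtain ⟨φ, hφ⟩ := AddMonoidHom.exists_comp_eq_of_ker_le (MonoidHom.toAdditive ι)
    (MonoidHom.toAdditiveLeft ψ) hker
  exact ⟨AddMonoidHom.toMultiplicativeRight φ, MonoidHom.ext fun a =>
    congrArg Multiplicative.ofAdd (DFunLike.congr_fun hφ (Additive.ofMul a))⟩

theorem Subgroup.snd_mem_range_pow_of_mem_sup {G H : Type*} [CommGroup G] [CommGroup H]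
    {n : ℕ} {J : Subgroup (G × H)}
    (hJ : ∀ j : J, (j : G × H).1 ∈ (powMonoidHom n : G →* G).range →
      j ∈ (powMonoidHom n : J →* J).range)
    {h : H} (hh : ((1 : G), h) ∈ J ⊔ (powMonoidHom n : G × H →* G × H).range) :
    h ∈ (powMonoidHom n : H →* H).range := by
  obtain ⟨j, hj, _, ⟨x, rfl⟩, hjx⟩ := Subgroup.mem_sup.mp hh
  have hj₁ : (x.1⁻¹) ^ n = j.1 := by
    rw [inv_pow, inv_eq_iff_mul_eq_one, mul_comm]
    exact congrArg Prod.fst hjx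
  obtain ⟨k, hk⟩ := hJ ⟨j, hj⟩ ⟨x.1⁻¹, hj₁⟩
  have hk : (k : G × H) ^ n = j := congrArg Subtype.val hk
  refine ⟨(k : G × H).2 * x.2, ?_⟩
  calc ((k : G × H).2 * x.2) ^ n = ((k : G × H) ^ n).2 * x.2 ^ n := mul_pow ..
    _ = j.2 * x.2 ^ n := by rw [hk]
    _ = h := congrArg Prod.snd hjx

/-- If the natural map `J/J^p → G/G^p` induced by the projection `π_G` is injective,
then the restriction map `Hom((G × H)/J, ℤ/pℤ) → Hom(H, ℤ/pℤ)` is surjective. -/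
theorem restriction_surjective_of_injective
    (p : ℕ) (hp : p.Prime) (G H : Type*) [CommGroup G] [CommGroup H]
    (J : Subgroup (G × H))
    (hinj : Function.Injective
      (QuotientGroup.map ((powMonoidHom p : J →* J).range)
        ((powMonoidHom p : G →* G).range)
        ((MonoidHom.fst G H).comp J.subtype)
        (by rintro _ ⟨y, rfl⟩; exact ⟨(y : G × H).1, by simp [powMonoidHom]⟩))) :
    Function.Surjective
      (fun φ : (G × H) ⧸ J →* Multiplicative (ZMod p) =>
        φ.comp ((QuotientGroup.mk' J).comp (MonoidHom.inr G H))) := by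
  have : Fact p.Prime := ⟨hp⟩
  intro ψ
  let N := J ⊔ (powMonoidHom p : G × H →* G × H).range
  have hJ : ∀ j : J, (j : G × H).1 ∈ (powMonoidHom p : G →* G).range →
      j ∈ (powMonoidHom p : J →* J).range := fun j hj =>
    (QuotientGroup.eq_one_iff j).mp <|
      (injective_iff_map_eq_one _).mp hinj _ ((QuotientGroup.eq_one_iff _).mpr hj)
  have hN : ∀ w : (G × H) ⧸ N, w ^ p = 1 := by
    rintro ⟨x⟩
    exact (QuotientGroup.eq_one_iff _).mpr (Subgroup.mem_sup_right ⟨x, rfl⟩)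
  have hker : ((QuotientGroup.mk' N).comp (MonoidHom.inr G H)).ker ≤ ψ.ker := by
    intro h hh
    obtain ⟨y, rfl⟩ :=
      Subgroup.snd_mem_range_pow_of_mem_sup hJ ((QuotientGroup.eq_one_iff _).mp hh)
    exact (map_pow ψ y p).trans (by simpa using pow_card_eq_one' (x := ψ y))
  obtain ⟨φ, hφ⟩ := MonoidHom.exists_comp_eq_of_ker_le hN _ ψ hker
  exact ⟨φ.comp (QuotientGroup.map J N (MonoidHom.id _) le_sup_left), hφ⟩
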